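/- Let N be a compact Riemannian manifold and γ ∈ VMO(S¹, N). Then the infimum of ∫_{S¹}|γ̃'|² over C¹ maps γ̃ : S¹ → N homotopic to γ in VMO(S¹, N) equals ‖γ‖²/(2π), where ‖γ‖ is the infimum of ∫_{S¹}|γ̃'| over the same class. -/

import Mathlib

open Real Metric

/-- A closed loop in `N`, parametrised as a continuous `2π`-periodic map. -/
def IsLoopIn {ν : ℕ} (N : Set (EuclideanSpace ℝ (Fin ν)))
    (γ : ℝ → EuclideanSpace ℝ (Fin ν)) : Prop :=
  Continuous γ ∧ Function.Periodic γ (2 * π) ∧ ∀ t, γ t ∈ N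

/-- Two loops are homotopic within `N`. -/
def LoopHomotopicIn {ν : ℕ} (N : Set (EuclideanSpace ℝ (Fin ν)))
    (f g : ℝ → EuclideanSpace ℝ (Fin ν)) : Prop :=
  ∃ H : ℝ × ℝ → EuclideanSpace ℝ (Fin ν), Continuous H ∧
    (∀ t, H (0, t) = f t) ∧ (∀ t, H (1, t) = g t) ∧
    (∀ p, H p ∈ N) ∧ (∀ s t, H (s, t + 2 * π) = H (s, t))

/-- The length of a loop. -/
noncomputable def loopLength {ν : ℕ} (γ : ℝ → EuclideanSpace ℝ (Fin ν)) : ℝ :=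
  ∫ t in (0 : ℝ)..(2 * π), ‖deriv γ t‖

/-- The minimal length `‖γ‖` in the homotopy class of `γ` in `N`: the infimum
of the lengths of `C¹` loops in `N` homotopic to `γ` within `N`. -/
noncomputable def minLength {ν : ℕ} (N : Set (EuclideanSpace ℝ (Fin ν)))
    (γ : ℝ → EuclideanSpace ℝ (Fin ν)) : ℝ :=
  sInf {L | ∃ β, ContDiff ℝ 1 β ∧ IsLoopIn N β ∧ LoopHomotopicIn N γ β ∧
    L = loopLength β}

/-! ### Auxiliary lemmas -/

section Aux

variable {ν : ℕ}

/-- The derivative of a periodic function is periodic. -/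
lemma periodic_deriv' {E : Type*} [NormedAddCommGroup E] [NormedSpace ℝ E]
    {f : ℝ → E} {T : ℝ} (h : Function.Periodic f T) :
    Function.Periodic (deriv f) T := by
  intro t
  have hfun : (fun x => f (x + T)) = f := funext h
  calc deriv f (t + T) = deriv (fun x => f (x + T)) t := (deriv_comp_add_const f T t).symm
    _ = deriv f t := by rw [hfun]

/-- Cauchy–Schwarz for a continuous real function on `[0, 2π]`. -/
lemma cs_ineq {f : ℝ → ℝ} (hf : Continuous f) :
    (∫ t in (0:ℝ)..(2*π), f t) ^ 2 ≤ 2 * π * ∫ t in (0:ℝ)..(2*π), (f t) ^ 2 := by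
  have h2π : (0:ℝ) < 2 * π := by positivity
  set I : ℝ := ∫ t in (0:ℝ)..(2*π), f t with hI
  set c : ℝ := I / (2 * π) with hc
  have hint1 : IntervalIntegrable f MeasureTheory.volume 0 (2*π) := hf.intervalIntegrable _ _
  have hint2 : IntervalIntegrable (fun t => (f t)^2) MeasureTheory.volume 0 (2*π) :=
    (hf.pow 2).intervalIntegrable _ _
  have hint3 : IntervalIntegrable (fun t => 2 * c * f t) MeasureTheory.volume 0 (2*π) :=
    ((continuous_const.mul hf)).intervalIntegrable _ _
  have key : (0:ℝ) ≤ ∫ t in (0:ℝ)..(2*π), (f t - c)^2 := by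
    apply intervalIntegral.integral_nonneg (by positivity)
    intro u _; positivity
  have expand : (∫ t in (0:ℝ)..(2*π), (f t - c)^2)
      = (∫ t in (0:ℝ)..(2*π), (f t)^2) - 2 * c * I + c^2 * (2*π) := by
    have h : ∀ t : ℝ, (f t - c)^2 = (f t)^2 - 2 * c * f t + c^2 := by intro t; ring
    simp_rw [h]
    rw [intervalIntegral.integral_add (hint2.sub hint3) (intervalIntegrable_const),
      intervalIntegral.integral_sub hint2 hint3,
      intervalIntegral.integral_const_mul, intervalIntegral.integral_const]
    rw [← hI]
    simp only [smul_eq_mul, sub_zero]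
    ring
  rw [expand] at key
  have hc2 : 2 * c * I = 2 * I^2 / (2*π) := by rw [hc]; ring
  have hc3 : c^2 * (2*π) = I^2 / (2*π) := by
    rw [hc]; field_simp
  rw [hc2, hc3] at key
  have hhh : 2 * I^2 / (2*π) = 2 * (I^2 / (2*π)) := by ring
  rw [hhh] at key
  have h1 : I ^ 2 / (2*π) ≤ ∫ t in (0:ℝ)..(2*π), (f t)^2 := by linarith
  have h2 : I^2 = 2*π * (I^2/(2*π)) := by field_simp
  calc I^2 = 2*π * (I^2/(2*π)) := h2
    _ ≤ 2*π * ∫ t in (0:ℝ)..(2*π), (f t)^2 :=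
        mul_le_mul_of_nonneg_left h1 (le_of_lt h2π)

/-- Transitivity of loop homotopy. -/
lemma loopHomotopicIn_trans {N : Set (EuclideanSpace ℝ (Fin ν))}
    {f g k : ℝ → EuclideanSpace ℝ (Fin ν)}
    (h1 : LoopHomotopicIn N f g) (h2 : LoopHomotopicIn N g k) :
    LoopHomotopicIn N f k := by
  obtain ⟨H1, hc1, h10, h11, hm1, hp1⟩ := h1
  obtain ⟨H2, hc2, h20, h21, hm2, hp2⟩ := h2
  refine ⟨fun p => if p.1 ≤ 1/2 then H1 (2 * p.1, p.2) else H2 (2 * p.1 - 1, p.2),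
    ?_, ?_, ?_, ?_, ?_⟩
  · apply Continuous.if_le
    · exact hc1.comp (by fun_prop)
    · exact hc2.comp (by fun_prop)
    · exact continuous_fst
    · exact continuous_const
    · intro p hp
      have h : H1 (2 * p.1, p.2) = H1 (1, p.2) := by rw [hp]; norm_num
      rw [h, h11, ← h20]
      congr 1
      rw [hp]; norm_num
  · intro t; norm_num [h10 t]
  · intro t
    have : ¬ ((1:ℝ) ≤ 1/2) := by norm_num
    simp only [this, if_false]
    norm_num [h21 t]
  · intro p
    dsimp only
    split <;> [exact hm1 _; exact hm2 _]
  · intro s t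
    dsimp only
    split <;> [exact hp1 _ t; exact hp2 _ t]

end Aux

/-! ### Reparametrisation -/

section Reparam

variable {ν : ℕ}

/-- Any `C¹` loop in `N` is homotopic within `N` to a `C¹` loop of almost-constant
speed, bounded by `(loopLength β + 2πδ)/(2π)`. -/
lemma exists_reparam {N : Set (EuclideanSpace ℝ (Fin ν))}
    {β : ℝ → EuclideanSpace ℝ (Fin ν)} (hβ : ContDiff ℝ 1 β) (hloop : IsLoopIn N β)
    {δ : ℝ} (hδ : 0 < δ) :
    ∃ β' : ℝ → EuclideanSpace ℝ (Fin ν), ContDiff ℝ 1 β' ∧ IsLoopIn N β' ∧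
      LoopHomotopicIn N β β' ∧
      ∀ s, ‖deriv β' s‖ ≤ (loopLength β + 2 * π * δ) / (2 * π) := by
  have h2π : (0:ℝ) < 2 * π := by positivity
  obtain ⟨hβc, hβper, hβN⟩ := hloop
  have hderiv_cont : Continuous (deriv β) := hβ.continuous_deriv le_rfl
  have hderiv_per : Function.Periodic (deriv β) (2 * π) := periodic_deriv' hβper
  set g : ℝ → ℝ := fun t => ‖deriv β t‖ + δ with hg
  have hgc : Continuous g := (hderiv_cont.norm).add continuous_const
  have hgpos : ∀ t, 0 < g t := fun t => by positivity
  have hgper : Function.Periodic g (2 * π) := fun t => by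
    simp only [hg, hderiv_per t]
  set ℓ : ℝ := loopLength β with hℓ
  have hℓ0 : 0 ≤ ℓ := by
    apply intervalIntegral.integral_nonneg (le_of_lt h2π)
    intro u _; positivity
  set M : ℝ := ℓ + 2 * π * δ with hM
  have hMpos : 0 < M := by positivity
  have hint : ∀ a b : ℝ, IntervalIntegrable g MeasureTheory.volume a b :=
    fun a b => hgc.intervalIntegrable a b
  have hgint : (∫ x in (0:ℝ)..(2*π), g x) = M := by
    rw [hg, hM, hℓ, loopLength]
    rw [intervalIntegral.integral_add ((hderiv_cont.norm).intervalIntegrable _ _)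
      intervalIntegrable_const]
    simp [mul_comm]
  set ψ : ℝ → ℝ := fun t => (2 * π / M) * ∫ x in (0:ℝ)..t, g x with hψ
  have hψd : ∀ t, HasDerivAt ψ ((2 * π / M) * g t) t := by
    intro t
    have h1 : HasDerivAt (fun u => ∫ x in (0:ℝ)..u, g x) (g t) t := by
      exact (intervalIntegral.integral_hasStrictDerivAt_right (hint 0 t)
        (hgc.stronglyMeasurableAtFilter _ _) hgc.continuousAt).hasDerivAt
    exact h1.const_mul (2 * π / M)
  have hψc : Continuous ψ := by
    have : Differentiable ℝ ψ := fun t => (hψd t).differentiableAt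
    exact this.continuous
  have hψmono : StrictMono ψ := by
    apply strictMono_of_deriv_pos
    intro t
    rw [(hψd t).deriv]
    have := hgpos t
    positivity
  have hψshift : ∀ t, ψ (t + 2*π) = ψ t + 2*π := by
    intro t
    have hadd : (∫ x in (0:ℝ)..(t + 2*π), g x)
        = (∫ x in (0:ℝ)..t, g x) + ∫ x in t..(t + 2*π), g x := by
      rw [intervalIntegral.integral_add_adjacent_intervals (hint 0 t) (hint t (t+2*π))]
    have hper : (∫ x in t..(t + 2*π), g x) = ∫ x in (0:ℝ)..(0 + 2*π), g x := by
      exact hgper.intervalIntegral_add_eq t 0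
    rw [hψ]
    simp only
    rw [hadd, hper]
    rw [zero_add, hgint]
    rw [mul_add]
    congr 1
    field_simp
  have hψsurj : Function.Surjective ψ := by
    intro y
    -- find n with ψ (-(2π n)) ≤ y ≤ ψ (2π n)
    have hshift_nat : ∀ n : ℕ, ψ (2*π*n) = ψ 0 + 2*π*n ∧ ψ (-(2*π*n)) = ψ 0 - 2*π*n := by
      intro n
      induction n with
      | zero => norm_num
      | succ m ih =>
        constructor
        · push_cast
          have h1 : (2*π*((m:ℝ)+1)) = 2*π*(m:ℝ) + 2*π := by ring
          rw [h1, hψshift, ih.1]; ring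
        · push_cast
          have h1 : (-(2*π*((m:ℝ)+1)) + 2*π) = -(2*π*(m:ℝ)) := by ring
          have h2 := hψshift (-(2*π*((m:ℝ)+1)))
          rw [h1, ih.2] at h2
          linarith
    obtain ⟨n, hn⟩ := exists_nat_ge ((|y - ψ 0|) / (2*π))
    have hn' : |y - ψ 0| ≤ 2*π*n := by
      rw [div_le_iff₀ h2π] at hn
      linarith [hn]
    have h1 : ψ (-(2*π*n)) ≤ y := by
      rw [(hshift_nat n).2]
      have := abs_le.mp hn'
      linarith [this.1]
    have h2 : y ≤ ψ (2*π*n) := by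
      rw [(hshift_nat n).1]
      have := abs_le.mp hn'
      linarith [this.2]
    have hIcc : y ∈ Set.Icc (ψ (-(2*π*n))) (ψ (2*π*n)) := ⟨h1, h2⟩
    have hsub : Set.Icc (ψ (-(2*π*n))) (ψ (2*π*n)) ⊆ ψ '' (Set.Icc (-(2*π*n)) (2*π*n)) := by
      apply intermediate_value_Icc _ (hψc.continuousOn)
      have : (0:ℝ) ≤ 2*π*n := by positivity
      linarith
    obtain ⟨x, _, hx⟩ := hsub hIcc
    exact ⟨x, hx⟩
  -- the inverse
  set e : ℝ ≃o ℝ := StrictMono.orderIsoOfSurjective ψ hψmono hψsurj with he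
  set φ : ℝ → ℝ := fun s => e.symm s with hφ
  have hφinv : ∀ s, ψ (φ s) = s := fun s =>
    StrictMono.orderIsoOfSurjective_self_symm_apply ψ hψmono hψsurj s
  have hinvφ : ∀ t, φ (ψ t) = t := fun t =>
    StrictMono.orderIsoOfSurjective_symm_apply_self ψ hψmono hψsurj t
  have hφc : Continuous φ := (e.symm.toHomeomorph).continuous
  have hφd : ∀ s, HasDerivAt φ (((2 * π / M) * g (φ s))⁻¹) s := by
    intro s
    apply HasDerivAt.of_local_left_inverse (hφc.continuousAt) (hψd (φ s))
    · have := hgpos (φ s); positivity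
    · exact Filter.Eventually.of_forall hφinv
  have hφdiff : Differentiable ℝ φ := fun s => (hφd s).differentiableAt
  have hφderiv : deriv φ = fun s => ((2 * π / M) * g (φ s))⁻¹ := by
    funext s; exact (hφd s).deriv
  have hφC1 : ContDiff ℝ 1 φ := by
    rw [contDiff_one_iff_deriv]
    refine ⟨hφdiff, ?_⟩
    rw [hφderiv]
    apply Continuous.inv₀
    · exact continuous_const.mul (hgc.comp hφc)
    · intro s; have := hgpos (φ s); positivity
  have hφshift : ∀ s, φ (s + 2*π) = φ s + 2*π := by
    intro s
    apply hψmono.injective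
    rw [hφinv, hψshift, hφinv]
  -- the reparametrised loop
  refine ⟨β ∘ φ, hβ.comp hφC1, ⟨hβc.comp hφc, ?_, fun t => hβN _⟩, ?_, ?_⟩
  · intro t
    simp only [Function.comp_apply, hφshift t, hβper (φ t)]
  · -- homotopy via linear interpolation of parameters
    refine ⟨fun p => β ((1 - p.1) * p.2 + p.1 * φ p.2), ?_, ?_, ?_, ?_, ?_⟩
    · apply hβc.comp
      fun_prop
    · intro t; norm_num
    · intro t; norm_num
    · intro p; exact hβN _
    · intro s t
      have heq : (1 - s) * (t + 2*π) + s * φ (t + 2*π) = ((1-s) * t + s * φ t) + 2*π := by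
        rw [hφshift]; ring
      dsimp only
      rw [heq]
      exact hβper _
  · -- speed bound
    intro s
    have hβd : HasDerivAt β (deriv β (φ s)) (φ s) :=
      ((hβ.differentiable one_ne_zero) (φ s)).hasDerivAt
    have hcomp : HasDerivAt (β ∘ φ) ((((2 * π / M) * g (φ s))⁻¹) • deriv β (φ s)) s :=
      hβd.scomp s (hφd s)
    rw [hcomp.deriv]
    rw [norm_smul]
    have hgφ : 0 < g (φ s) := hgpos _
    have hfactor : ‖(((2 * π / M) * g (φ s))⁻¹ : ℝ)‖ = M / (2 * π * g (φ s)) := by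
      rw [Real.norm_eq_abs, abs_inv]
      rw [abs_of_pos (by positivity)]
      rw [← one_div]
      field_simp
    rw [hfactor]
    have hbound : ‖deriv β (φ s)‖ ≤ g (φ s) := by
      rw [hg]; simp only; linarith [hδ.le]
    calc M / (2 * π * g (φ s)) * ‖deriv β (φ s)‖
        ≤ M / (2 * π * g (φ s)) * g (φ s) := by
          apply mul_le_mul_of_nonneg_left hbound
          positivity
      _ = M / (2 * π) := by field_simp
      _ = (ℓ + 2 * π * δ) / (2 * π) := by rw [hM]

end Reparam

section Limits

/-- Passing to the limit in `ε`. -/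
lemma le_sq_div_of_forall_pos {c a : ℝ} (h : ∀ ε > (0:ℝ), c ≤ (a + ε)^2 / (2*π)) :
    c ≤ a^2 / (2*π) := by
  have ht : Filter.Tendsto (fun ε : ℝ => (a + ε)^2 / (2*π)) (nhdsWithin 0 (Set.Ioi 0))
      (nhds (a^2 / (2*π))) := by
    have hcont : Continuous (fun ε : ℝ => (a + ε)^2 / (2*π)) := by continuity
    have ht1 : Filter.Tendsto (fun ε : ℝ => (a + ε)^2 / (2*π)) (nhdsWithin 0 (Set.Ioi 0))
        (nhds ((a + 0)^2 / (2*π))) := (hcont.tendsto 0).mono_left nhdsWithin_le_nhds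
    simpa using ht1
  exact ge_of_tendsto ht (eventually_nhdsWithin_of_forall fun ε hε => h ε hε)

end Limits

/-- For a smooth compact (sub)manifold `N` (encoded as a compact subset of
`ℝ^ν` which is a smooth neighbourhood retract) and a loop `γ` in `N`, the
infimum of the Dirichlet energies `∫_{S¹}|β'|²` over `C¹` loops `β` in `N`
homotopic to `γ` within `N` equals `‖γ‖²/(2π)`, where `‖γ‖` is the minimal
length in the homotopy class of `γ`. -/
theorem minEnergy_eq_minLength_sq_div_two_pi
    {ν : ℕ} (N : Set (EuclideanSpace ℝ (Fin ν)))
    (hN : IsCompact N) (hNne : N.Nonempty)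
    -- `N` is a smooth neighbourhood retract:
    (U : Set (EuclideanSpace ℝ (Fin ν))) (hU : IsOpen U) (hNU : N ⊆ U)
    (r : EuclideanSpace ℝ (Fin ν) → EuclideanSpace ℝ (Fin ν))
    (hr : ContDiffOn ℝ (⊤ : ℕ∞) r U) (hrN : ∀ x ∈ U, r x ∈ N)
    (hrid : ∀ x ∈ N, r x = x)
    (γ : ℝ → EuclideanSpace ℝ (Fin ν)) (hγ : IsLoopIn N γ) :
    sInf {e | ∃ β, ContDiff ℝ 1 β ∧ IsLoopIn N β ∧ LoopHomotopicIn N γ β ∧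
        e = ∫ t in (0 : ℝ)..(2 * π), ‖deriv β t‖ ^ 2}
      = (minLength N γ) ^ 2 / (2 * π) := by
  have h2π : (0:ℝ) < 2 * π := by positivity
  set S : Set (ℝ → EuclideanSpace ℝ (Fin ν)) :=
    {β | ContDiff ℝ 1 β ∧ IsLoopIn N β ∧ LoopHomotopicIn N γ β} with hS
  set E : Set ℝ := {e | ∃ β, ContDiff ℝ 1 β ∧ IsLoopIn N β ∧ LoopHomotopicIn N γ β ∧
        e = ∫ t in (0 : ℝ)..(2 * π), ‖deriv β t‖ ^ 2} with hE
  set Λ : Set ℝ := {L | ∃ β, ContDiff ℝ 1 β ∧ IsLoopIn N β ∧ LoopHomotopicIn N γ β ∧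
    L = loopLength β} with hΛ
  by_cases hcl : ∃ β, ContDiff ℝ 1 β ∧ IsLoopIn N β ∧ LoopHomotopicIn N γ β
  swap
  · -- degenerate case: empty homotopy class of C¹ loops
    have hEe : E = ∅ := by
      ext e; simp only [hE, Set.mem_setOf_eq, Set.mem_empty_iff_false, iff_false]
      rintro ⟨β, h1, h2, h3, _⟩; exact hcl ⟨β, h1, h2, h3⟩
    have hΛe : Λ = ∅ := by
      ext e; simp only [hΛ, Set.mem_setOf_eq, Set.mem_empty_iff_false, iff_false]
      rintro ⟨β, h1, h2, h3, _⟩; exact hcl ⟨β, h1, h2, h3⟩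
    rw [show minLength N γ = sInf Λ from rfl, hΛe, hEe, Real.sInf_empty]
    norm_num
  obtain ⟨β₀, hβ₀⟩ := hcl
  -- basic facts
  have hlen_nonneg : ∀ β : ℝ → EuclideanSpace ℝ (Fin ν), 0 ≤ loopLength β := by
    intro β
    apply intervalIntegral.integral_nonneg (le_of_lt h2π)
    intro u _; positivity
  have hΛne : Λ.Nonempty := ⟨loopLength β₀, β₀, hβ₀.1, hβ₀.2.1, hβ₀.2.2, rfl⟩
  have hΛbdd : BddBelow Λ := by
    refine ⟨0, ?_⟩
    rintro L ⟨β, _, _, _, rfl⟩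
    exact hlen_nonneg β
  have hEne : E.Nonempty :=
    ⟨_, β₀, hβ₀.1, hβ₀.2.1, hβ₀.2.2, rfl⟩
  have hEbdd : BddBelow E := by
    refine ⟨0, ?_⟩
    rintro e ⟨β, _, _, _, rfl⟩
    apply intervalIntegral.integral_nonneg (le_of_lt h2π)
    intro u _; positivity
  set L : ℝ := minLength N γ with hLdef
  have hLΛ : L = sInf Λ := rfl
  have hL0 : 0 ≤ L := by
    rw [hLΛ]
    exact le_csInf hΛne (fun x hx => by
      obtain ⟨β, _, _, _, rfl⟩ := hx; exact hlen_nonneg β)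
  apply le_antisymm
  · -- sInf E ≤ L² / (2π)
    apply le_sq_div_of_forall_pos
    intro ε hε
    -- pick β with loopLength β < L + ε/2
    have hlt : sInf Λ < L + ε/2 := by rw [← hLΛ]; linarith
    obtain ⟨ℓ, hℓΛ, hℓlt⟩ := exists_lt_of_csInf_lt hΛne hlt
    obtain ⟨β, hβ1, hβ2, hβ3, rfl⟩ := hℓΛ
    -- for each δ > 0, reparametrise
    have key : ∀ δ > (0:ℝ), sInf E ≤ (loopLength β + 2*π*δ)^2 / (2*π) := by
      intro δ hδ
      obtain ⟨β', hβ'1, hβ'2, hβ'3, hβ'4⟩ := exists_reparam hβ1 hβ2 hδ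
      have hmem : (∫ t in (0:ℝ)..(2*π), ‖deriv β' t‖ ^ 2) ∈ E :=
        ⟨β', hβ'1, hβ'2, loopHomotopicIn_trans hβ3 hβ'3, rfl⟩
      have hbd : (∫ t in (0:ℝ)..(2*π), ‖deriv β' t‖ ^ 2)
          ≤ (loopLength β + 2*π*δ)^2 / (2*π) := by
        set C : ℝ := (loopLength β + 2*π*δ) / (2*π) with hC
        have hC0 : 0 ≤ C := by
          have := hlen_nonneg β
          positivity
        have hd'c : Continuous (deriv β') := hβ'1.continuous_deriv le_rfl
        have hstep : (∫ t in (0:ℝ)..(2*π), ‖deriv β' t‖ ^ 2)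
            ≤ ∫ _t in (0:ℝ)..(2*π), C ^ 2 := by
          apply intervalIntegral.integral_mono_on (le_of_lt h2π)
          · exact ((hd'c.norm.pow 2)).intervalIntegrable _ _
          · exact intervalIntegrable_const
          · intro u _
            exact pow_le_pow_left₀ (norm_nonneg _) (hβ'4 u) 2
        rw [intervalIntegral.integral_const, smul_eq_mul, sub_zero] at hstep
        calc (∫ t in (0:ℝ)..(2*π), ‖deriv β' t‖ ^ 2) ≤ 2*π * C^2 := hstep
          _ = (loopLength β + 2*π*δ)^2 / (2*π) := by
            rw [hC]; field_simp
      exact le_trans (csInf_le hEbdd hmem) hbd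
    -- take δ → 0
    have hβle : sInf E ≤ (loopLength β)^2 / (2*π) := by
      apply le_sq_div_of_forall_pos
      intro ε' hε'
      have hδ : (0:ℝ) < ε' / (2*π) := by positivity
      have := key (ε'/(2*π)) hδ
      have heq : loopLength β + 2*π*(ε'/(2*π)) = loopLength β + ε' := by
        field_simp
      rwa [heq] at this
    -- loopLength β < L + ε/2 ≤ L + ε
    have hsq : (loopLength β)^2 ≤ (L + ε)^2 := by
      apply pow_le_pow_left₀ (hlen_nonneg β) _ 2
      linarith
    calc sInf E ≤ (loopLength β)^2 / (2*π) := hβle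
      _ ≤ (L + ε)^2 / (2*π) := by gcongr
  · -- L² / (2π) ≤ sInf E
    apply le_csInf hEne
    rintro e ⟨β, hβ1, hβ2, hβ3, rfl⟩
    have hcs := cs_ineq (f := fun t => ‖deriv β t‖) (hβ1.continuous_deriv le_rfl).norm
    have hlen : L ≤ loopLength β := by
      rw [hLΛ]
      exact csInf_le hΛbdd ⟨β, hβ1, hβ2, hβ3, rfl⟩
    have hL2 : L^2 ≤ (loopLength β)^2 := pow_le_pow_left₀ hL0 hlen 2
    have : L^2 ≤ 2*π * ∫ t in (0:ℝ)..(2*π), ‖deriv β t‖^2 := le_trans hL2 hcs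
    rw [div_le_iff₀ h2π]
    linarith [this]
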